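/- arXiv:0905.1183 — 4 statements merged into one kernel-verified Lean document; each statement's English description precedes it below -/
import Mathlib

section
/- If E is both a variational subsolution and a variational supersolution for the nonlocal perimeter functional J_Ω, then E is a minimizer of J_Ω among all sets F that agree with E outside Ω. Precisely, for any such F, writing A⁺ = F \ E and A⁻ = E \ F, one has J_Ω(F) − J_Ω(E) = [L(A⁻, E \ A⁻) − L(A⁻, C E)] − [L(A⁺, E) − L(A⁺, C(E ∪ A⁺))] + 2 L(A⁻, A⁺) ≥ 0. -/
open MeasureTheory Metric Filter Set

/-- Interaction energy `L(A,B) = ∫∫ χ_A(x) χ_B(y) |x-y|^{-(n+s)} dx dy`, valued in `[0,∞]`. -/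
noncomputable def interactionL (n : ℕ) (s : ℝ)
    (A B : Set (EuclideanSpace ℝ (Fin n))) : ENNReal :=
  ∫⁻ x in A, ∫⁻ y in B, ENNReal.ofReal (1 / ‖x - y‖ ^ ((n : ℝ) + s))

/-- The `Ω`-contribution of the `H^{s/2}` seminorm of `χ_E`:
`J_Ω(E) = L(E ∩ Ω, C E) + L(E \ Ω, C E ∩ Ω)`. -/
noncomputable def Jfun (n : ℕ) (s : ℝ) (Ω E : Set (EuclideanSpace ℝ (Fin n))) : ENNReal :=
  interactionL n s (E ∩ Ω) Eᶜ + interactionL n s (E \ Ω) (Eᶜ ∩ Ω)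

private lemma kmeas {n : ℕ} {s : ℝ} (hq : 0 ≤ (n : ℝ) + s) :
    Measurable (Function.uncurry fun x y : EuclideanSpace ℝ (Fin n) =>
      ENNReal.ofReal (1 / ‖x - y‖ ^ ((n : ℝ) + s))) := by
  apply Measurable.ennreal_ofReal
  exact measurable_const.div
    (((Real.continuous_rpow_const hq).comp ((continuous_fst.sub continuous_snd).norm)).measurable)

private lemma L_symm {n : ℕ} {s : ℝ} (hq : 0 ≤ (n : ℝ) + s) (A B : Set (EuclideanSpace ℝ (Fin n))) :
    interactionL n s A B = interactionL n s B A := by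
  unfold interactionL
  rw [lintegral_lintegral_swap ((kmeas hq).aemeasurable)]
  exact lintegral_congr fun x => lintegral_congr fun y => by rw [norm_sub_rev]

private lemma L_union_left {n : ℕ} {s : ℝ} (A B C : Set (EuclideanSpace ℝ (Fin n)))
    (hB : MeasurableSet B) (h : Disjoint A B) :
    interactionL n s (A ∪ B) C = interactionL n s A C + interactionL n s B C :=
  lintegral_union hB h

private lemma L_union_right {n : ℕ} {s : ℝ} (hq : 0 ≤ (n : ℝ) + s)
    (A B C : Set (EuclideanSpace ℝ (Fin n))) (hC : MeasurableSet C) (h : Disjoint B C) :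
    interactionL n s A (B ∪ C) = interactionL n s A B + interactionL n s A C := by
  rw [L_symm hq A, L_union_left B C A hC h, L_symm hq B A, L_symm hq C A]

private lemma L_mono {n : ℕ} {s : ℝ} {A A' B B' : Set (EuclideanSpace ℝ (Fin n))}
    (hA : A ⊆ A') (hB : B ⊆ B') : interactionL n s A B ≤ interactionL n s A' B' :=
  lintegral_mono' (Measure.restrict_mono hA le_rfl)
    (fun _ => lintegral_mono' (Measure.restrict_mono hB le_rfl) le_rfl)

set_option maxHeartbeats 2000000 in
/-- If `E` is both a variational subsolution and supersolution for `J_Ω`, then `E` is a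
minimizer, and the difference of energies is given by the identity
`J_Ω(F) − J_Ω(E) = [L(A⁻, E \ A⁻) − L(A⁻, C E)] − [L(A⁺, E) − L(A⁺, C(E ∪ A⁺))] + 2 L(A⁻, A⁺)`,
here stated in the subtraction-free (rearranged) form suitable for `[0,∞]`-valued energies. -/
theorem minimizer_of_sub_supersolution (n : ℕ) (hn : 1 ≤ n) (s : ℝ) (hs : s ∈ Set.Ioo (0:ℝ) 1)
    (Ω : Set (EuclideanSpace ℝ (Fin n))) (hΩo : IsOpen Ω) (hΩb : Bornology.IsBounded Ω)
    (E : Set (EuclideanSpace ℝ (Fin n))) (hE : MeasurableSet E)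
    (hEfin : Jfun n s Ω E < ⊤)
    -- `E` is a variational supersolution:
    (hsuper : ∀ A : Set (EuclideanSpace ℝ (Fin n)), MeasurableSet A → A ⊆ Eᶜ ∩ Ω →
      interactionL n s A E ≤ interactionL n s A (E ∪ A)ᶜ)
    -- `E` is a variational subsolution:
    (hsub : ∀ A : Set (EuclideanSpace ℝ (Fin n)), MeasurableSet A → A ⊆ E ∩ Ω →
      interactionL n s A Eᶜ ≤ interactionL n s A (E \ A)) :
    ∀ F : Set (EuclideanSpace ℝ (Fin n)), MeasurableSet F → F ∩ Ωᶜ = E ∩ Ωᶜ →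
      Jfun n s Ω E ≤ Jfun n s Ω F ∧
      Jfun n s Ω F + interactionL n s (E \ F) Eᶜ + interactionL n s (F \ E) E =
        Jfun n s Ω E + interactionL n s (E \ F) (E \ (E \ F))
          + interactionL n s (F \ E) (E ∪ (F \ E))ᶜ
          + 2 * interactionL n s (E \ F) (F \ E) := by
  intro F hFm hFc
  have hq : 0 ≤ (n : ℝ) + s := add_nonneg (Nat.cast_nonneg n) hs.1.le
  have hFx : ∀ x, x ∉ Ω → (x ∈ F ↔ x ∈ E) := by
    intro x hx
    have h := Set.ext_iff.mp hFc x
    simp only [mem_inter_iff, mem_compl_iff] at h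
    tauto
  have hΩm : MeasurableSet Ω := hΩo.measurableSet
  -- measurability of the atoms
  have hM : MeasurableSet (E ∩ F ∩ Ω) := (hE.inter hFm).inter hΩm
  have hAm : MeasurableSet (E \ F) := hE.diff hFm
  have hAp : MeasurableSet (F \ E) := hFm.diff hE
  have hN : MeasurableSet (Eᶜ ∩ Fᶜ ∩ Ω) := (hE.compl.inter hFm.compl).inter hΩm
  have hP : MeasurableSet (E \ Ω) := hE.diff hΩm
  have hQ : MeasurableSet (Eᶜ ∩ Ωᶜ) := hE.compl.inter hΩm.compl
  -- subset facts
  have hAmsub : E \ F ⊆ E ∩ Ω := by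
    intro x hx; have h := hFx x
    simp only [mem_diff] at hx; simp only [mem_inter_iff]; tauto
  have hApsub : F \ E ⊆ Eᶜ ∩ Ω := by
    intro x hx; have h := hFx x
    simp only [mem_diff] at hx; simp only [mem_inter_iff, mem_compl_iff]; tauto
  -- disjointness of atoms
  have dMAm : Disjoint (E ∩ F ∩ Ω) (E \ F) := by
    rw [Set.disjoint_left]; intro x hx hx'
    simp only [mem_inter_iff, mem_diff] at hx hx'; tauto
  have dMAp : Disjoint (E ∩ F ∩ Ω) (F \ E) := by
    rw [Set.disjoint_left]; intro x hx hx'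
    simp only [mem_inter_iff, mem_diff] at hx hx'; tauto
  have dMP : Disjoint (E ∩ F ∩ Ω) (E \ Ω) := by
    rw [Set.disjoint_left]; intro x hx hx'
    simp only [mem_inter_iff, mem_diff] at hx hx'; tauto
  have dAmN : Disjoint (E \ F) (Eᶜ ∩ Fᶜ ∩ Ω) := by
    rw [Set.disjoint_left]; intro x hx hx'
    simp only [mem_inter_iff, mem_diff, mem_compl_iff] at hx hx'; tauto
  have dAmP : Disjoint (E \ F) (E \ Ω) := by
    rw [Set.disjoint_left]; intro x hx hx'; have h := hFx x
    simp only [mem_diff] at hx hx'; tauto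
  have dAmQ : Disjoint (E \ F) (Eᶜ ∩ Ωᶜ) := by
    rw [Set.disjoint_left]; intro x hx hx'
    simp only [mem_inter_iff, mem_diff, mem_compl_iff] at hx hx'; tauto
  have dApN : Disjoint (F \ E) (Eᶜ ∩ Fᶜ ∩ Ω) := by
    rw [Set.disjoint_left]; intro x hx hx'
    simp only [mem_inter_iff, mem_diff, mem_compl_iff] at hx hx'; tauto
  have dApQ : Disjoint (F \ E) (Eᶜ ∩ Ωᶜ) := by
    rw [Set.disjoint_left]; intro x hx hx'; have h := hFx x
    simp only [mem_inter_iff, mem_diff, mem_compl_iff] at hx hx'; tauto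
  have dNQ : Disjoint (Eᶜ ∩ Fᶜ ∩ Ω) (Eᶜ ∩ Ωᶜ) := by
    rw [Set.disjoint_left]; intro x hx hx'
    simp only [mem_inter_iff, mem_compl_iff] at hx hx'; tauto
  have dMAmP : Disjoint (E ∩ F ∩ Ω ∪ E \ F) (E \ Ω) := disjoint_union_left.mpr ⟨dMP, dAmP⟩
  have dApNQ : Disjoint (F \ E ∪ Eᶜ ∩ Fᶜ ∩ Ω) (Eᶜ ∩ Ωᶜ) := disjoint_union_left.mpr ⟨dApQ, dNQ⟩
  have dAmNQ : Disjoint (E \ F ∪ Eᶜ ∩ Fᶜ ∩ Ω) (Eᶜ ∩ Ωᶜ) := disjoint_union_left.mpr ⟨dAmQ, dNQ⟩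
  -- set identities
  have h1 : E ∩ Ω = E ∩ F ∩ Ω ∪ E \ F := by
    ext x; have h := hFx x
    simp only [mem_inter_iff, mem_union, mem_diff]; tauto
  have h3 : Eᶜ = (F \ E ∪ Eᶜ ∩ Fᶜ ∩ Ω) ∪ Eᶜ ∩ Ωᶜ := by
    ext x; have h := hFx x
    simp only [mem_inter_iff, mem_union, mem_diff, mem_compl_iff]; tauto
  have h4 : Eᶜ ∩ Ω = F \ E ∪ Eᶜ ∩ Fᶜ ∩ Ω := by
    ext x; have h := hFx x
    simp only [mem_inter_iff, mem_union, mem_diff, mem_compl_iff]; tauto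
  have h5 : F ∩ Ω = E ∩ F ∩ Ω ∪ F \ E := by
    ext x; have h := hFx x
    simp only [mem_inter_iff, mem_union, mem_diff]; tauto
  have h6 : F \ Ω = E \ Ω := by
    ext x; have h := hFx x
    simp only [mem_diff]; tauto
  have h7 : Fᶜ = (E \ F ∪ Eᶜ ∩ Fᶜ ∩ Ω) ∪ Eᶜ ∩ Ωᶜ := by
    ext x; have h := hFx x
    simp only [mem_inter_iff, mem_union, mem_diff, mem_compl_iff]; tauto
  have h8 : Fᶜ ∩ Ω = E \ F ∪ Eᶜ ∩ Fᶜ ∩ Ω := by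
    ext x; have h := hFx x
    simp only [mem_inter_iff, mem_union, mem_diff, mem_compl_iff]; tauto
  have h9 : E = (E ∩ F ∩ Ω ∪ E \ F) ∪ E \ Ω := by
    ext x; have h := hFx x
    simp only [mem_inter_iff, mem_union, mem_diff]; tauto
  have h10 : E \ (E \ F) = E ∩ F ∩ Ω ∪ E \ Ω := by
    ext x; have h := hFx x
    simp only [mem_inter_iff, mem_union, mem_diff]; tauto
  have h11 : (E ∪ F \ E)ᶜ = Eᶜ ∩ Fᶜ ∩ Ω ∪ Eᶜ ∩ Ωᶜ := by
    ext x; have h := hFx x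
    simp only [mem_inter_iff, mem_union, mem_diff, mem_compl_iff]; tauto
  -- abbreviate the atoms
  set M := E ∩ F ∩ Ω with hM_def
  set Am := E \ F with hAm_def
  set Ap := F \ E with hAp_def
  set N := Eᶜ ∩ Fᶜ ∩ Ω with hN_def
  set P := E \ Ω with hP_def
  set Q := Eᶜ ∩ Ωᶜ with hQ_def
  -- the main identity
  have hident : Jfun n s Ω F + interactionL n s Am Eᶜ + interactionL n s Ap E =
      Jfun n s Ω E + interactionL n s Am (E \ Am) + interactionL n s Ap (E ∪ Ap)ᶜ
        + 2 * interactionL n s Am Ap := by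
    unfold Jfun
    rw [h10, h11, h1, h4, h5, h6, h8, ← hP_def, h3, h7, h9]
    rw [L_union_left M Ap ((Am ∪ N) ∪ Q) hAp dMAp,
        L_union_left M Am ((Ap ∪ N) ∪ Q) hAm dMAm,
        L_union_right hq M (Am ∪ N) Q hQ dAmNQ,
        L_union_right hq Ap (Am ∪ N) Q hQ dAmNQ,
        L_union_right hq M Am N hN dAmN,
        L_union_right hq Ap Am N hN dAmN,
        L_union_right hq M (Ap ∪ N) Q hQ dApNQ,
        L_union_right hq Am (Ap ∪ N) Q hQ dApNQ,
        L_union_right hq M Ap N hN dApN,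
        L_union_right hq Am Ap N hN dApN,
        L_union_right hq P Am N hN dAmN,
        L_union_right hq P Ap N hN dApN,
        L_union_right hq Am M P hP dMP,
        L_union_right hq Ap N Q hQ dNQ,
        L_union_right hq Ap (M ∪ Am) P hP dMAmP,
        L_union_right hq Ap M Am hAm dMAm]
    rw [L_symm hq Ap Am, L_symm hq P Am, L_symm hq Ap M, L_symm hq P Ap, L_symm hq P N,
        L_symm hq Am M]
    ring
  refine ⟨?_, hident⟩
  -- finiteness of the two cancellable terms
  have hfin1 : interactionL n s Am Eᶜ ≠ ⊤ := by
    refine ne_top_of_le_ne_top hEfin.ne (le_trans (L_mono hAmsub subset_rfl) ?_)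
    unfold Jfun; exact le_self_add
  have b1 : interactionL n s Ap (M ∪ Am) ≤ Jfun n s Ω E := by
    rw [L_symm hq]
    refine le_trans (L_mono h1.symm.subset (hApsub.trans inter_subset_left)) ?_
    unfold Jfun; exact le_self_add
  have b2 : interactionL n s Ap P ≤ Jfun n s Ω E := by
    rw [L_symm hq]
    refine le_trans (L_mono hP_def.subset hApsub) ?_
    unfold Jfun; exact le_add_self
  have hfin2 : interactionL n s Ap E ≠ ⊤ := by
    refine ne_top_of_le_ne_top (ENNReal.add_ne_top.mpr ⟨hEfin.ne, hEfin.ne⟩) ?_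
    calc interactionL n s Ap E
        = interactionL n s Ap (M ∪ Am) + interactionL n s Ap P := by
          conv_lhs => rw [h9]
          exact L_union_right hq Ap (M ∪ Am) P hP dMAmP
      _ ≤ Jfun n s Ω E + Jfun n s Ω E := add_le_add b1 b2
  -- the sub/supersolution inequalities
  have hX : interactionL n s Am Eᶜ ≤ interactionL n s Am (E \ Am) := hsub Am hAm hAmsub
  have hY : interactionL n s Ap E ≤ interactionL n s Ap (E ∪ Ap)ᶜ := hsuper Ap hAp hApsub
  have key : Jfun n s Ω E + interactionL n s Am Eᶜ + interactionL n s Ap E ≤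
      Jfun n s Ω F + interactionL n s Am Eᶜ + interactionL n s Ap E := by
    rw [hident]
    exact le_trans (add_le_add (add_le_add le_rfl hX) hY) le_self_add
  rw [ENNReal.add_le_add_iff_right hfin2, ENNReal.add_le_add_iff_right hfin1] at key
  exact key
end

section
/- Let Ω ⊆ R^n be a bounded Lipschitz domain and E₀ ⊆ C Ω a given set with J_Ω(E₀ considered as a set with empty intersection with Ω) finite. Then there exists a measurable set E with E ∩ C Ω = E₀ such that J_Ω(E) = inf { J_Ω(F) : F ∩ C Ω = E₀ }. -/
open MeasureTheory Metric Filter Set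

/-!
`J_Ω(F)` is the mass, for the measure `|x - y|^{-(n+s)} dx dy` on pairs, of the cut set
`{(x, y) | x ∈ F, y ∉ F, x ∈ Ω ∨ y ∈ Ω}`. Inclusions between cut sets make `J_Ω` submodular,
and Fatou's lemma for sets makes it lower semicontinuous under pointwise convergence of sets;
no compactness is needed. If `J(F_k) ≤ m + 2^{-k}` along a minimizing sequence, submodularity
together with `J(A ∪ B) ≥ m` gives `J(F_j ∩ ⋯ ∩ F_{j+k}) ≤ m + ∑_{i ≥ j} 2^{-i}`, so
`J(⋂_{k ≥ j} F_k) ≤ m + 2^{1-j}` by semicontinuity, and `⋃_j ⋂_{k ≥ j} F_k` is a minimizer.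
-/

open scoped ENNReal

section Submodular

variable {L : Type*} [CompleteLattice L] {S : Set L} {J : L → ℝ≥0∞} {m : ℝ≥0∞}

def IsSubmodularOn (J : L → ℝ≥0∞) (S : Set L) : Prop :=
  ∀ a ∈ S, ∀ b ∈ S, J (a ⊓ b) + J (a ⊔ b) ≤ J a + J b

theorem inf_add_le_add_of_submodular (hS : SupClosed S) (hJ : IsSubmodularOn J S)
    (hm : ∀ b ∈ S, m ≤ J b) {a b : L} (ha : a ∈ S) (hb : b ∈ S) : J (a ⊓ b) + m ≤ J a + J b :=
  (add_le_add_right (hm _ (hS ha hb)) _).trans (hJ a ha b hb)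

theorem InfClosed.biInf_le_mem (hS : InfClosed S) {G : ℕ → L} (hG : ∀ k, G k ∈ S) (k : ℕ) :
    ⨅ i ≤ k, G i ∈ S := by
  induction k with
  | zero => simpa using hG 0
  | succ k ih => rw [Nat.iInf_le_succ]; exact hS ih (hG _)

theorem apply_biInf_le_le_add_sum (hinf : InfClosed S) (hsup : SupClosed S)
    (hJ : IsSubmodularOn J S) (hm : ∀ b ∈ S, m ≤ J b) (hm_top : m ≠ ⊤)
    {G : ℕ → L} {ε : ℕ → ℝ≥0∞} (hG : ∀ k, G k ∈ S) (hGJ : ∀ k, J (G k) ≤ m + ε k) (k : ℕ) :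
    J (⨅ i ≤ k, G i) ≤ m + ∑ i ∈ Finset.range (k + 1), ε i := by
  induction k with
  | zero => simpa using hGJ 0
  | succ k ih =>
    rw [Nat.iInf_le_succ, Finset.sum_range_succ]
    refine (ENNReal.add_le_add_iff_right hm_top).1 ?_
    calc J ((⨅ i ≤ k, G i) ⊓ G (k + 1)) + m
        ≤ J (⨅ i ≤ k, G i) + J (G (k + 1)) :=
          inf_add_le_add_of_submodular hsup hJ hm (hinf.biInf_le_mem hG k) (hG _)
      _ ≤ (m + ∑ i ∈ Finset.range (k + 1), ε i) + (m + ε (k + 1)) := add_le_add ih (hGJ _)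
      _ = m + (∑ i ∈ Finset.range (k + 1), ε i + ε (k + 1)) + m := by ring

theorem iInf_mem_and_apply_iInf_le_add_tsum (hinf : InfClosed S) (hsup : SupClosed S)
    (hS_iInf : ∀ f : ℕ → L, Antitone f → (∀ k, f k ∈ S) → ⨅ k, f k ∈ S)
    (hJ : IsSubmodularOn J S)
    (hJ_iInf : ∀ f : ℕ → L, Antitone f → (∀ k, f k ∈ S) →
      J (⨅ k, f k) ≤ liminf (fun k => J (f k)) atTop)
    (hm : ∀ b ∈ S, m ≤ J b) (hm_top : m ≠ ⊤) {G : ℕ → L} {ε : ℕ → ℝ≥0∞} (hG : ∀ k, G k ∈ S)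
    (hGJ : ∀ k, J (G k) ≤ m + ε k) :
    ⨅ k, G k ∈ S ∧ J (⨅ k, G k) ≤ m + ∑' k, ε k := by
  have hanti : Antitone fun k => ⨅ i ≤ k, G i :=
    antitone_nat_of_succ_le fun k => by rw [Nat.iInf_le_succ]; exact inf_le_left
  rw [← biInf_le_eq_iInf]
  refine ⟨hS_iInf _ hanti (hinf.biInf_le_mem hG),
    (hJ_iInf _ hanti (hinf.biInf_le_mem hG)).trans ?_⟩
  refine liminf_le_of_frequently_le' (Frequently.of_forall fun k => ?_)
  exact (apply_biInf_le_le_add_sum hinf hsup hJ hm hm_top hG hGJ k).trans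
    (by gcongr; exact ENNReal.sum_le_tsum _)

theorem exists_eq_iInf_of_submodular (hne : S.Nonempty) (hinf : InfClosed S) (hsup : SupClosed S)
    (hS_iInf : ∀ f : ℕ → L, Antitone f → (∀ k, f k ∈ S) → ⨅ k, f k ∈ S)
    (hS_iSup : ∀ f : ℕ → L, Monotone f → (∀ k, f k ∈ S) → ⨆ k, f k ∈ S)
    (hJ : IsSubmodularOn J S)
    (hJ_iInf : ∀ f : ℕ → L, Antitone f → (∀ k, f k ∈ S) →
      J (⨅ k, f k) ≤ liminf (fun k => J (f k)) atTop)
    (hJ_iSup : ∀ f : ℕ → L, Monotone f → (∀ k, f k ∈ S) →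
      J (⨆ k, f k) ≤ liminf (fun k => J (f k)) atTop) :
    ∃ a ∈ S, J a = ⨅ b ∈ S, J b := by
  set m := ⨅ b ∈ S, J b
  have hm : ∀ b ∈ S, m ≤ J b := fun b hb => iInf₂_le b hb
  obtain ⟨a, ha⟩ := hne
  by_cases hm_top : m = ⊤
  · exact ⟨a, ha, le_antisymm (hm_top ▸ le_top) (hm a ha)⟩
  set ε : ℕ → ℝ≥0∞ := fun k => 2⁻¹ ^ k
  have hε : ∑' k, ε k ≠ ⊤ := by simp [ε, ENNReal.tsum_geometric]
  have hmin : ∀ k, ∃ a ∈ S, J a ≤ m + ε k := fun k => by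
    obtain ⟨a, ha, hlt⟩ := lt_biInf_iff.1
      (ENNReal.lt_add_right hm_top (pow_ne_zero k (by norm_num) : ε k ≠ 0))
    exact ⟨a, ha, hlt.le⟩
  choose F hF hFJ using hmin
  set T : ℕ → L := fun j => ⨅ k, F (k + j)
  have hT : ∀ j, T j ∈ S ∧ J (T j) ≤ m + ∑' k, ε (k + j) := fun j =>
    iInf_mem_and_apply_iInf_le_add_tsum hinf hsup hS_iInf hJ hJ_iInf hm hm_top (fun _ => hF _)
      (fun _ => hFJ _)
  have hT_mono : Monotone T := monotone_nat_of_le_succ fun j =>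
    le_iInf fun k => (iInf_le _ (k + 1)).trans_eq (by rw [add_right_comm, add_assoc])
  have hE : ⨆ j, T j ∈ S := hS_iSup T hT_mono fun j => (hT j).1
  refine ⟨⨆ j, T j, hE, le_antisymm ?_ (hm _ hE)⟩
  calc J (⨆ j, T j) ≤ liminf (fun j => J (T j)) atTop := hJ_iSup T hT_mono fun j => (hT j).1
    _ ≤ liminf (fun j => m + ∑' k, ε (k + j)) atTop :=
        liminf_le_liminf (Eventually.of_forall fun j => (hT j).2)
    _ = m := by simpa using ((ENNReal.tendsto_sum_nat_add ε hε).const_add m).liminf_eq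

end Submodular

section CutSet

variable {α : Type*} {Ω E F G : Set α}

def cutSet (Ω F : Set α) : Set (α × α) := (F ∩ Ω) ×ˢ Fᶜ ∪ (F \ Ω) ×ˢ (Fᶜ ∩ Ω)

theorem mem_cutSet {p : α × α} :
    p ∈ cutSet Ω F ↔ p.1 ∈ F ∧ p.2 ∉ F ∧ (p.1 ∈ Ω ∨ p.2 ∈ Ω) := by
  simp only [cutSet, mem_union, mem_prod, mem_inter_iff, Set.mem_sdiff, mem_compl_iff]
  tauto

theorem cutSet_inter_inter_cutSet_union_subset :
    cutSet Ω (F ∩ G) ∩ cutSet Ω (F ∪ G) ⊆ cutSet Ω F ∩ cutSet Ω G := by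
  intro p
  simp only [mem_inter_iff, mem_cutSet, mem_union]
  tauto

theorem cutSet_inter_union_cutSet_union_subset :
    cutSet Ω (F ∩ G) ∪ cutSet Ω (F ∪ G) ⊆ cutSet Ω F ∪ cutSet Ω G := by
  intro p
  simp only [mem_union, mem_cutSet, mem_inter_iff]
  tauto

theorem eventually_mem_cutSet {ι : Type*} {l : Filter ι} {F : ι → Set α}
    (hF : ∀ x, ∀ᶠ k in l, x ∈ F k ↔ x ∈ E) {p : α × α} (hp : p ∈ cutSet Ω E) :
    ∀ᶠ k in l, p ∈ cutSet Ω (F k) := by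
  filter_upwards [hF p.1, hF p.2] with k h1 h2
  rw [mem_cutSet] at hp ⊢
  rwa [h1, h2]

theorem MeasurableSet.cutSet [MeasurableSpace α] (hΩ : MeasurableSet Ω) (hF : MeasurableSet F) :
    MeasurableSet (cutSet Ω F) :=
  ((hF.inter hΩ).prod hF.compl).union ((hF.diff hΩ).prod (hF.compl.inter hΩ))

end CutSet

section MeasureLemmas

variable {α : Type*} [MeasurableSpace α] {μ : Measure α}

theorem measure_add_measure_le_of_inter_subset_of_union_subset {A B C D : Set α}
    (hB : MeasurableSet B) (hD : MeasurableSet D) (hinter : A ∩ B ⊆ C ∩ D)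
    (hunion : A ∪ B ⊆ C ∪ D) : μ A + μ B ≤ μ C + μ D := by
  rw [← measure_union_add_inter A hB, ← measure_union_add_inter C hD]
  exact add_le_add (measure_mono hunion) (measure_mono hinter)

theorem measure_le_liminf_of_eventually_mem {A : Set α} {B : ℕ → Set α}
    (h : ∀ x ∈ A, ∀ᶠ k in atTop, x ∈ B k) : μ A ≤ liminf (fun k => μ (B k)) atTop := by
  have hmono : Monotone fun n => ⋂ k ≥ n, B k := fun _ _ hab =>
    biInter_mono (fun _ hk => hab.trans hk) fun _ _ => subset_rfl
  calc μ A ≤ μ (⋃ n, ⋂ k ≥ n, B k) := measure_mono fun x hx => by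
        obtain ⟨n, hn⟩ := eventually_atTop.1 (h x hx)
        exact mem_iUnion.2 ⟨n, mem_iInter₂.2 hn⟩
    _ = ⨆ n, μ (⋂ k ≥ n, B k) := hmono.measure_iUnion
    _ ≤ ⨆ n, ⨅ k ≥ n, μ (B k) :=
        iSup_mono fun _ => le_iInf₂ fun _ hk => measure_mono (biInter_subset_of_mem hk)
    _ = liminf (fun k => μ (B k)) atTop := liminf_eq_iSup_iInf_of_nat.symm

end MeasureLemmas

theorem Antitone.eventually_mem_iff_mem_iInter {α : Type*} {f : ℕ → Set α} (hf : Antitone f)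
    (x : α) : ∀ᶠ k in atTop, x ∈ f k ↔ x ∈ ⋂ k, f k := by
  by_cases hx : x ∈ ⋂ k, f k
  · exact Eventually.of_forall fun k => iff_of_true (mem_iInter.1 hx k) hx
  · obtain ⟨k₀, hk₀⟩ : ∃ k, x ∉ f k := by simpa using hx
    exact eventually_atTop.2 ⟨k₀, fun k hk => iff_of_false (fun h => hk₀ (hf hk h)) hx⟩

theorem Monotone.eventually_mem_iff_mem_iUnion {α : Type*} {f : ℕ → Set α} (hf : Monotone f)
    (x : α) : ∀ᶠ k in atTop, x ∈ f k ↔ x ∈ ⋃ k, f k := by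
  by_cases hx : x ∈ ⋃ k, f k
  · obtain ⟨k₀, hk₀⟩ := mem_iUnion.1 hx
    exact eventually_atTop.2 ⟨k₀, fun k hk => iff_of_true (hf hk hk₀) hx⟩
  · exact Eventually.of_forall fun k => iff_of_false (fun h => hx (mem_iUnion.2 ⟨k, h⟩)) hx

section Jfun

variable {n : ℕ} {s : ℝ} {Ω E F G : Set (EuclideanSpace ℝ (Fin n))}

noncomputable def interactionMeasure (n : ℕ) (s : ℝ) :
    Measure (EuclideanSpace ℝ (Fin n) × EuclideanSpace ℝ (Fin n)) :=
  volume.withDensity fun p => ENNReal.ofReal (1 / ‖p.1 - p.2‖ ^ ((n : ℝ) + s))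

theorem interactionL_eq_interactionMeasure_prod {A B : Set (EuclideanSpace ℝ (Fin n))}
    (hA : MeasurableSet A) (hB : MeasurableSet B) :
    interactionL n s A B = interactionMeasure n s (A ×ˢ B) := by
  rw [interactionMeasure, withDensity_apply _ (hA.prod hB), Measure.volume_eq_prod,
    setLIntegral_prod _ (by fun_prop)]
  rfl

theorem Jfun_eq_interactionMeasure_cutSet (hΩ : MeasurableSet Ω) (hF : MeasurableSet F) :
    Jfun n s Ω F = interactionMeasure n s (cutSet Ω F) := by
  rw [Jfun, interactionL_eq_interactionMeasure_prod (hF.inter hΩ) hF.compl,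
    interactionL_eq_interactionMeasure_prod (hF.diff hΩ) (hF.compl.inter hΩ), cutSet,
    measure_union _ ((hF.diff hΩ).prod (hF.compl.inter hΩ))]
  exact disjoint_left.2 fun p hp hp' => hp'.1.2 hp.1.2

theorem Jfun_inter_add_Jfun_union_le (hΩ : MeasurableSet Ω) (hF : MeasurableSet F)
    (hG : MeasurableSet G) :
    Jfun n s Ω (F ∩ G) + Jfun n s Ω (F ∪ G) ≤ Jfun n s Ω F + Jfun n s Ω G := by
  simp only [Jfun_eq_interactionMeasure_cutSet hΩ, hF, hG, hF.inter hG, hF.union hG]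
  exact measure_add_measure_le_of_inter_subset_of_union_subset
    (.cutSet hΩ (hF.union hG)) (.cutSet hΩ hG) cutSet_inter_inter_cutSet_union_subset
    cutSet_inter_union_cutSet_union_subset

theorem Jfun_le_liminf (hΩ : MeasurableSet Ω) {F : ℕ → Set (EuclideanSpace ℝ (Fin n))}
    (hF : ∀ k, MeasurableSet (F k)) (hE : MeasurableSet E)
    (hFE : ∀ x, ∀ᶠ k in atTop, x ∈ F k ↔ x ∈ E) :
    Jfun n s Ω E ≤ liminf (fun k => Jfun n s Ω (F k)) atTop := by
  simp only [Jfun_eq_interactionMeasure_cutSet hΩ, hF, hE]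
  exact measure_le_liminf_of_eventually_mem fun p hp => eventually_mem_cutSet hFE hp

end Jfun

section Competitors

variable {α : Type*} [MeasurableSpace α] {Ω E₀ : Set α}

def competitors (Ω E₀ : Set α) : Set (Set α) := {F | MeasurableSet F ∧ F ∩ Ωᶜ = E₀}

theorem infClosed_competitors : InfClosed (competitors Ω E₀) := fun F hF G hG =>
  ⟨hF.1.inter hG.1, show F ∩ G ∩ Ωᶜ = E₀ by rw [inter_inter_distrib_right, hF.2, hG.2, inter_self]⟩

theorem supClosed_competitors : SupClosed (competitors Ω E₀) := fun F hF G hG =>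
  ⟨hF.1.union hG.1,
    show (F ∪ G) ∩ Ωᶜ = E₀ by rw [union_inter_distrib_right, hF.2, hG.2, union_self]⟩

theorem iInter_mem_competitors {F : ℕ → Set α} (hF : ∀ k, F k ∈ competitors Ω E₀) :
    ⋂ k, F k ∈ competitors Ω E₀ :=
  ⟨.iInter fun k => (hF k).1, by simp only [iInter_inter, (hF _).2, iInter_const]⟩

theorem iUnion_mem_competitors {F : ℕ → Set α} (hF : ∀ k, F k ∈ competitors Ω E₀) :
    ⋃ k, F k ∈ competitors Ω E₀ :=
  ⟨.iUnion fun k => (hF k).1, by simp only [iUnion_inter, (hF _).2, iUnion_const]⟩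

end Competitors

theorem exists_minimizer_general (n : ℕ) (s : ℝ)
    (Ω : Set (EuclideanSpace ℝ (Fin n))) (hΩo : IsOpen Ω)
    (E₀ : Set (EuclideanSpace ℝ (Fin n))) (hE₀ : MeasurableSet E₀) (hE₀Ω : E₀ ⊆ Ωᶜ) :
    ∃ E : Set (EuclideanSpace ℝ (Fin n)), MeasurableSet E ∧ E ∩ Ωᶜ = E₀ ∧
      Jfun n s Ω E =
        ⨅ (F : Set (EuclideanSpace ℝ (Fin n))) (_ : MeasurableSet F ∧ F ∩ Ωᶜ = E₀),
          Jfun n s Ω F := by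
  have hΩ := hΩo.measurableSet
  obtain ⟨E, hE, hEJ⟩ := exists_eq_iInf_of_submodular (S := competitors Ω E₀) (J := Jfun n s Ω)
    ⟨E₀, hE₀, inter_eq_left.2 hE₀Ω⟩ infClosed_competitors supClosed_competitors
    (fun _ _ hF => iInter_mem_competitors hF) (fun _ _ hF => iUnion_mem_competitors hF)
    (fun _ hF _ hG => Jfun_inter_add_Jfun_union_le hΩ hF.1 hG.1)
    (fun _ hF hFS => Jfun_le_liminf hΩ (fun k => (hFS k).1) (iInter_mem_competitors hFS).1
      hF.eventually_mem_iff_mem_iInter)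
    (fun _ hF hFS => Jfun_le_liminf hΩ (fun k => (hFS k).1) (iUnion_mem_competitors hFS).1
      hF.eventually_mem_iff_mem_iUnion)
  exact ⟨E, hE.1, hE.2, hEJ⟩

/-- Existence of minimizers: given exterior data `E₀ ⊆ C Ω` with finite energy,
there is a set `E` agreeing with `E₀` outside `Ω` attaining the infimum of `J_Ω`. -/
theorem exists_minimizer (n : ℕ) (hn : 1 ≤ n) (s : ℝ) (hs : s ∈ Set.Ioo (0:ℝ) 1)
    (Ω : Set (EuclideanSpace ℝ (Fin n))) (hΩo : IsOpen Ω) (hΩb : Bornology.IsBounded Ω)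
    (E₀ : Set (EuclideanSpace ℝ (Fin n))) (hE₀ : MeasurableSet E₀) (hE₀Ω : E₀ ⊆ Ωᶜ)
    (hfin : Jfun n s Ω E₀ < ⊤) :
    ∃ E : Set (EuclideanSpace ℝ (Fin n)), MeasurableSet E ∧ E ∩ Ωᶜ = E₀ ∧
      Jfun n s Ω E =
        ⨅ (F : Set (EuclideanSpace ℝ (Fin n))) (_ : MeasurableSet F ∧ F ∩ Ωᶜ = E₀),
          Jfun n s Ω F :=
  exists_minimizer_general n s Ω hΩo E₀ hE₀ hE₀Ω
end

section
/- Let V : (0,1] → [0,∞) be nondecreasing and a : (0,1] → [0,∞) with V(t) = ∫_0^t a(ρ) dρ, and suppose V(r)^{(n-s)/n} ≤ C ∫_0^r a(ρ)(r-ρ)^{-s} dρ for all r ∈ (0,1]. Then there exists c > 0 depending only on n, s, C such that if V(1) ≤ c then V(1/2) = 0. -/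
/-!
Integrating the hypothesis over `r ∈ (t', t]` and exchanging the order of integration gives
`(t - t') V(t')^θ ≤ C t^{1-s} / (1 - s) · V(t)` with `θ = (n - s)/n < 1`. Along the radii
`t_k = 1/2 + 2^{-k-1}` this becomes `V(t_{k+1})^θ ≤ A 2^k V(t_k)`. Since the exponent `1/θ`
exceeds `1`, smallness of `V(t_0) = V(1)` propagates to a geometric bound `V(t_k) ≤ ε q^k` with
`q < 1`, so `V(1/2) ≤ V(t_k) → 0`.
-/

open MeasureTheory Set
open Filter Topology
open scoped ENNReal

theorem lintegral_Ioc_ofReal_sub_rpow_neg {s ρ t : ℝ} (hs : s < 1) (hρt : ρ ≤ t) :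
    ∫⁻ r in Ioc ρ t, ENNReal.ofReal ((r - ρ) ^ (-s)) =
      ENNReal.ofReal ((t - ρ) ^ (1 - s) / (1 - s)) := by
  have hexp : -1 < -s := by linarith
  have hint : IntegrableOn (fun r : ℝ => (r - ρ) ^ (-s)) (Ioc ρ t) := by
    rw [← intervalIntegrable_iff_integrableOn_Ioc_of_le hρt]
    simpa using
      (intervalIntegral.intervalIntegrable_rpow' (a := 0) (b := t - ρ) hexp).comp_sub_right ρ
  have hnonneg : 0 ≤ᵐ[volume.restrict (Ioc ρ t)] fun r => (r - ρ) ^ (-s) := by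
    filter_upwards [ae_restrict_mem measurableSet_Ioc] with r hr
    exact Real.rpow_nonneg (by linarith [hr.1]) _
  rw [← ofReal_integral_eq_lintegral_ofReal hint hnonneg, ← intervalIntegral.integral_of_le hρt,
    intervalIntegral.integral_comp_sub_right (fun x => x ^ (-s)), integral_rpow (Or.inl hexp),
    sub_self, Real.zero_rpow (by linarith)]
  ring_nf

theorem lintegral_Ioc_lintegral_Ioo_mul_rpow_le {s t' t : ℝ} (hs : s < 1) {f : ℝ → ℝ≥0∞}
    (hf : AEMeasurable f (volume.restrict (Ioo 0 t))) :
    ∫⁻ r in Ioc t' t, ∫⁻ ρ in Ioo 0 r, f ρ * ENNReal.ofReal ((r - ρ) ^ (-s)) ≤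
      ∫⁻ ρ in Ioo 0 t, f ρ * ENNReal.ofReal ((t - ρ) ^ (1 - s) / (1 - s)) := by
  -- Cutting the integrand off at `ρ < r` puts both iterated integrals over one rectangle.
  set F : ℝ → ℝ → ℝ≥0∞ := fun r ρ =>
    (Iio r).indicator (fun ρ => f ρ * ENNReal.ofReal ((r - ρ) ^ (-s))) ρ with hF
  have hk : Measurable fun p : ℝ × ℝ => ENNReal.ofReal ((p.1 - p.2) ^ (-s)) :=
    ((measurable_fst.sub measurable_snd).pow_const _).ennreal_ofReal
  have hFm : AEMeasurable (Function.uncurry F)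
      ((volume.restrict (Ioc t' t)).prod (volume.restrict (Ioo 0 t))) := by
    have : Function.uncurry F = {p : ℝ × ℝ | p.2 < p.1}.indicator
        fun p => f p.2 * ENNReal.ofReal ((p.1 - p.2) ^ (-s)) := by
      ext p; simp [hF, indicator_apply, Function.uncurry]
    rw [this]
    exact (hf.comp_snd.mul hk.aemeasurable).indicator
      (measurableSet_lt measurable_snd measurable_fst)
  calc ∫⁻ r in Ioc t' t, ∫⁻ ρ in Ioo 0 r, f ρ * ENNReal.ofReal ((r - ρ) ^ (-s))
      = ∫⁻ r in Ioc t' t, ∫⁻ ρ in Ioo 0 t, F r ρ := by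
        refine setLIntegral_congr_fun measurableSet_Ioc fun r hr => ?_
        rw [lintegral_indicator measurableSet_Iio, Measure.restrict_restrict measurableSet_Iio,
          Iio_inter_Ioo, min_eq_left hr.2]
    _ = ∫⁻ ρ in Ioo 0 t, ∫⁻ r in Ioc t' t, F r ρ := lintegral_lintegral_swap hFm
    _ ≤ ∫⁻ ρ in Ioo 0 t, f ρ * ENNReal.ofReal ((t - ρ) ^ (1 - s) / (1 - s)) := by
        refine setLIntegral_mono' measurableSet_Ioo fun ρ hρ => ?_
        have hFρ : (fun r => F r ρ) =
            (Ioi ρ).indicator fun r => f ρ * ENNReal.ofReal ((r - ρ) ^ (-s)) := by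
          ext r; simp [hF, indicator_apply]
        rw [hFρ, lintegral_indicator measurableSet_Ioi, Measure.restrict_restrict measurableSet_Ioi,
          ← lintegral_Ioc_ofReal_sub_rpow_neg hs hρ.2.le,
          ← lintegral_const_mul _
            (by fun_prop : Measurable fun r : ℝ => ENNReal.ofReal ((r - ρ) ^ (-s)))]
        exact lintegral_mono_set fun r hr => ⟨hr.1, hr.2.2⟩

theorem sub_mul_le_of_le_mul_integral_mul_rpow {a : ℝ → ℝ} {s C x t' t : ℝ} (hs : s < 1)
    (hC : 0 ≤ C) (ht't : t' ≤ t) (ht : 0 ≤ t) (ha : ∀ ρ ∈ Ioo 0 t, 0 ≤ a ρ)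
    (hai : IntegrableOn a (Ioo 0 t))
    (hx : ∀ r ∈ Ioc t' t, x ≤ C * ∫ ρ in Ioo 0 r, a ρ * (r - ρ) ^ (-s)) :
    (t - t') * x ≤ C * t ^ (1 - s) / (1 - s) * ∫ ρ in Ioo 0 t, a ρ := by
  have hlow : ∀ r ∈ Ioc t' t, ENNReal.ofReal x ≤ ENNReal.ofReal C *
      ∫⁻ ρ in Ioo 0 r, ENNReal.ofReal (a ρ) * ENNReal.ofReal ((r - ρ) ^ (-s)) := by
    intro r hr
    calc ENNReal.ofReal x
        ≤ ENNReal.ofReal C * ENNReal.ofReal (∫ ρ in Ioo 0 r, a ρ * (r - ρ) ^ (-s)) := by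
          rw [← ENNReal.ofReal_mul hC]; exact ENNReal.ofReal_le_ofReal (hx r hr)
      _ ≤ ENNReal.ofReal C * ∫⁻ ρ in Ioo 0 r, ‖a ρ * (r - ρ) ^ (-s)‖ₑ := by
          gcongr
          exact (Real.ofReal_le_enorm _).trans (enorm_integral_le_lintegral_enorm _)
      _ = ENNReal.ofReal C *
          ∫⁻ ρ in Ioo 0 r, ENNReal.ofReal (a ρ) * ENNReal.ofReal ((r - ρ) ^ (-s)) := by
          congr 1
          refine setLIntegral_congr_fun measurableSet_Ioo fun ρ hρ => ?_
          have haρ := ha ρ ⟨hρ.1, hρ.2.trans_le hr.2⟩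
          rw [Real.enorm_eq_ofReal (mul_nonneg haρ (Real.rpow_nonneg (by linarith [hρ.2]) _)),
            ENNReal.ofReal_mul haρ]
  have hkernel : ∀ ρ ∈ Ioo 0 t, (t - ρ) ^ (1 - s) / (1 - s) ≤ t ^ (1 - s) / (1 - s) := by
    intro ρ hρ
    have : 0 < 1 - s := by linarith
    gcongr
    · linarith [hρ.2]
    · linarith [hρ.1]
  have hint : ∫⁻ ρ in Ioo 0 t, ENNReal.ofReal (a ρ) = ENNReal.ofReal (∫ ρ in Ioo 0 t, a ρ) :=
    (ofReal_integral_eq_lintegral_ofReal hai (ae_restrict_of_forall_mem measurableSet_Ioo ha)).symm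
  have hfactor : 0 ≤ C * t ^ (1 - s) / (1 - s) :=
    div_nonneg (mul_nonneg hC (Real.rpow_nonneg ht _)) (by linarith)
  have key : ENNReal.ofReal ((t - t') * x) ≤
      ENNReal.ofReal (C * t ^ (1 - s) / (1 - s) * ∫ ρ in Ioo 0 t, a ρ) := calc
    ENNReal.ofReal ((t - t') * x) ≤ ∫⁻ _ in Ioc t' t, ENNReal.ofReal x := by
      rw [setLIntegral_const, Real.volume_Ioc, mul_comm, ENNReal.ofReal_mul' (sub_nonneg.2 ht't)]
    _ ≤ ∫⁻ r in Ioc t' t, ENNReal.ofReal C *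
          ∫⁻ ρ in Ioo 0 r, ENNReal.ofReal (a ρ) * ENNReal.ofReal ((r - ρ) ^ (-s)) :=
      setLIntegral_mono' measurableSet_Ioc hlow
    _ ≤ ENNReal.ofReal C *
          ∫⁻ ρ in Ioo 0 t, ENNReal.ofReal (a ρ) * ENNReal.ofReal ((t - ρ) ^ (1 - s) / (1 - s)) := by
      rw [lintegral_const_mul' _ _ ENNReal.ofReal_ne_top]
      gcongr ENNReal.ofReal C * ?_
      exact lintegral_Ioc_lintegral_Ioo_mul_rpow_le hs hai.aemeasurable.ennreal_ofReal
    _ ≤ ENNReal.ofReal C *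
          ∫⁻ ρ in Ioo 0 t, ENNReal.ofReal (a ρ) * ENNReal.ofReal (t ^ (1 - s) / (1 - s)) := by
      gcongr ENNReal.ofReal C * ?_
      refine setLIntegral_mono' measurableSet_Ioo fun ρ hρ => ?_
      gcongr ENNReal.ofReal (a ρ) * ENNReal.ofReal ?_
      exact hkernel ρ hρ
    _ = ENNReal.ofReal (C * t ^ (1 - s) / (1 - s) * ∫ ρ in Ioo 0 t, a ρ) := by
      rw [lintegral_mul_const' _ _ ENNReal.ofReal_ne_top, hint, ENNReal.ofReal_mul hfactor,
        mul_div_assoc, ENNReal.ofReal_mul hC]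
      ring
  exact (ENNReal.ofReal_le_ofReal_iff
    (mul_nonneg hfactor (setIntegral_nonneg measurableSet_Ioo ha))).1 key

theorem sub_mul_rpow_le_of_rpow_le_mul_integral {V a : ℝ → ℝ} {s C θ t' t : ℝ} (hs : s < 1)
    (hC : 0 ≤ C) (hθ : 0 ≤ θ) (ht' : 0 < t') (ht't : t' ≤ t) (ht : t ≤ 1)
    (hV0 : ∀ r ∈ Ioc (0:ℝ) 1, 0 ≤ V r) (hmono : MonotoneOn V (Ioc 0 1)) (ha0 : ∀ ρ, 0 ≤ a ρ)
    (haint : IntegrableOn a (Ioc 0 1)) (hVint : ∀ r ∈ Ioc (0:ℝ) 1, V r = ∫ ρ in Ioo 0 r, a ρ)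
    (hineq : ∀ r ∈ Ioc (0:ℝ) 1, V r ^ θ ≤ C * ∫ ρ in Ioo 0 r, a ρ * (r - ρ) ^ (-s)) :
    (t - t') * V t' ^ θ ≤ C / (1 - s) * V t := by
  have ht'_mem : t' ∈ Ioc (0:ℝ) 1 := ⟨ht', ht't.trans ht⟩
  have ht_mem : t ∈ Ioc (0:ℝ) 1 := ⟨ht'.trans_le ht't, ht⟩
  have hbound := sub_mul_le_of_le_mul_integral_mul_rpow hs hC ht't ht_mem.1.le
    (fun ρ _ => ha0 ρ) (haint.mono_set (Ioo_subset_Ioc_self.trans (Ioc_subset_Ioc_right ht)))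
    fun r hr => (Real.rpow_le_rpow (hV0 t' ht'_mem) (hmono ht'_mem ⟨ht'.trans hr.1, hr.2.trans ht⟩
      hr.1.le) hθ).trans (hineq r ⟨ht'.trans hr.1, hr.2.trans ht⟩)
  rw [← hVint t ht_mem] at hbound
  refine hbound.trans (mul_le_mul_of_nonneg_right ?_ (hV0 t ht_mem))
  exact div_le_div_of_nonneg_right
    (mul_le_of_le_one_right hC (Real.rpow_le_one ht_mem.1.le ht (by linarith))) (by linarith)

theorem le_mul_pow_of_rpow_succ_le {θ A B ε q : ℝ} {u : ℕ → ℝ} (hθ : 0 < θ) (hA : 0 ≤ A)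
    (hB : 0 ≤ B) (hε : 0 < ε) (hq : 0 < q) (hAε : A * ε ^ (1 - θ) ≤ q ^ θ)
    (hBq : B * q ^ (1 - θ) ≤ 1) (hu : ∀ k, 0 ≤ u k)
    (hrec : ∀ k, u (k + 1) ^ θ ≤ A * B ^ k * u k) (h0 : u 0 ≤ ε) (k : ℕ) :
    u k ≤ ε * q ^ k := by
  induction k with
  | zero => simpa using h0
  | succ k ih =>
    have hsplit : ∀ x : ℝ, 0 < x → x ^ θ * x ^ (1 - θ) = x := fun x hx => by
      rw [← Real.rpow_add hx, add_sub_cancel, Real.rpow_one]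
    rw [← Real.rpow_le_rpow_iff (hu _) (by positivity) hθ]
    calc u (k + 1) ^ θ ≤ A * B ^ k * (ε * q ^ k) :=
          (hrec k).trans (mul_le_mul_of_nonneg_left ih (by positivity))
      _ = A * B ^ k * ((ε ^ θ * ε ^ (1 - θ)) * (q ^ θ * q ^ (1 - θ)) ^ k) := by
          rw [hsplit ε hε, hsplit q hq]
      _ = ε ^ θ * (q ^ θ) ^ k * ((A * ε ^ (1 - θ)) * (B * q ^ (1 - θ)) ^ k) := by ring
      _ ≤ ε ^ θ * (q ^ θ) ^ k * (q ^ θ * 1) := by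
          gcongr
          exact pow_le_one₀ (mul_nonneg hB (by positivity)) hBq
      _ = (ε * q ^ (k + 1)) ^ θ := by
          rw [Real.mul_rpow hε.le (by positivity), ← Real.rpow_pow_comm hq.le]
          ring

theorem exists_pos_tendsto_zero_of_rpow_succ_le {θ A B : ℝ} (hθ0 : 0 < θ) (hθ1 : θ < 1)
    (hA : 0 < A) (hB : 1 < B) :
    ∃ ε > 0, ∀ u : ℕ → ℝ, (∀ k, 0 ≤ u k) → (∀ k, u (k + 1) ^ θ ≤ A * B ^ k * u k) →
      u 0 ≤ ε → Tendsto u atTop (𝓝 0) := by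
  have hθ : 1 - θ ≠ 0 := by linarith
  set q := B ^ (-(1 - θ)⁻¹)
  have hq0 : 0 < q := by positivity
  have hq1 : q < 1 := Real.rpow_lt_one_of_one_lt_of_neg hB (by simp; linarith)
  have hBq : B * q ^ (1 - θ) = 1 := by
    rw [← Real.rpow_mul (by linarith), neg_mul, inv_mul_cancel₀ hθ, Real.rpow_neg_one,
      mul_inv_cancel₀ (by linarith)]
  set ε := (q ^ θ / A) ^ (1 - θ)⁻¹
  have hAε : A * ε ^ (1 - θ) = q ^ θ := by
    rw [← Real.rpow_mul (by positivity), inv_mul_cancel₀ hθ, Real.rpow_one,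
      mul_div_cancel₀ _ hA.ne']
  refine ⟨ε, by positivity, fun u hu hrec h0 => ?_⟩
  have hdecay := le_mul_pow_of_rpow_succ_le hθ0 hA.le (by linarith) (by positivity) hq0
    hAε.le hBq.le hu hrec h0
  have hgeom : Tendsto (fun k : ℕ => ε * q ^ k) atTop (𝓝 0) := by
    simpa using (tendsto_pow_atTop_nhds_zero_of_lt_one hq0.le hq1).const_mul ε
  exact squeeze_zero hu hdecay hgeom

noncomputable def dyadicRadius (k : ℕ) : ℝ := 1 / 2 + (1 / 2) ^ (k + 1)

theorem dyadicRadius_zero : dyadicRadius 0 = 1 := by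
  norm_num [dyadicRadius]

theorem dyadicRadius_mem_Ioc (k : ℕ) : dyadicRadius k ∈ Ioc (1 / 2) 1 := by
  have hpos : (0 : ℝ) < (1 / 2) ^ (k + 1) := by positivity
  have hle : (1 / 2 : ℝ) ^ (k + 1) ≤ 1 / 2 :=
    pow_le_of_le_one (by norm_num) (by norm_num) k.succ_ne_zero
  constructor <;> unfold dyadicRadius <;> linarith

theorem dyadicRadius_sub_succ (k : ℕ) :
    dyadicRadius k - dyadicRadius (k + 1) = (1 / 2) ^ (k + 2) := by
  unfold dyadicRadius; ring

/-- De Giorgi iteration lemma: if `V(t) = ∫_0^t a` is nondecreasing on `(0,1]` and satisfies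
`V(r)^{(n-s)/n} ≤ C ∫_0^r a(ρ)(r-ρ)^{-s} dρ`, then there is `c > 0` (depending only on
`n`, `s`, `C`) such that `V(1) ≤ c` implies `V(1/2) = 0`. -/
theorem deGiorgi_iteration (n : ℕ) (hn : 1 ≤ n) (s C : ℝ)
    (hs : s ∈ Set.Ioo (0:ℝ) 1) (hC : 0 < C) :
    ∃ c : ℝ, 0 < c ∧ ∀ V a : ℝ → ℝ,
      (∀ t ∈ Set.Ioc (0:ℝ) 1, 0 ≤ V t) →
      MonotoneOn V (Set.Ioc (0:ℝ) 1) →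
      (∀ ρ, 0 ≤ a ρ) →
      IntegrableOn a (Set.Ioc (0:ℝ) 1) →
      (∀ t ∈ Set.Ioc (0:ℝ) 1, V t = ∫ ρ in Set.Ioo (0:ℝ) t, a ρ) →
      (∀ r ∈ Set.Ioc (0:ℝ) 1,
        V r ^ (((n : ℝ) - s) / (n : ℝ)) ≤ C * ∫ ρ in Set.Ioo (0:ℝ) r, a ρ * (r - ρ) ^ (-s)) →
      V 1 ≤ c → V (1/2) = 0 := by
  obtain ⟨hs0, hs1⟩ := hs
  have hn' : (1 : ℝ) ≤ n := by exact_mod_cast hn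
  set θ := ((n : ℝ) - s) / n
  have hθ0 : 0 < θ := div_pos (by linarith) (by linarith)
  have hθ1 : θ < 1 := (div_lt_one (by linarith)).2 (by linarith)
  obtain ⟨ε, hε, hdecay⟩ := exists_pos_tendsto_zero_of_rpow_succ_le hθ0 hθ1
    (A := 4 * (C / (1 - s))) (by have := div_pos hC (sub_pos.2 hs1); positivity) one_lt_two
  refine ⟨ε, hε, fun V a hV0 hmono ha0 haint hVint hineq hV1 => ?_⟩
  have hmem : ∀ k, dyadicRadius k ∈ Ioc (0:ℝ) 1 := fun k =>
    Ioc_subset_Ioc_left (by norm_num) (dyadicRadius_mem_Ioc k)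
  have hrec : ∀ k, V (dyadicRadius (k + 1)) ^ θ ≤
      4 * (C / (1 - s)) * 2 ^ k * V (dyadicRadius k) := fun k => by
    have hstep := sub_mul_rpow_le_of_rpow_le_mul_integral hs1 hC.le hθ0.le (hmem (k + 1)).1
      (by rw [← sub_nonneg, dyadicRadius_sub_succ]; positivity)
      (hmem k).2 hV0 hmono ha0 haint hVint hineq
    rw [dyadicRadius_sub_succ] at hstep
    calc _ = 2 ^ (k + 2) * ((1 / 2) ^ (k + 2) * V (dyadicRadius (k + 1)) ^ θ) := by
          rw [← mul_assoc, ← mul_pow]; norm_num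
      _ ≤ 2 ^ (k + 2) * (C / (1 - s) * V (dyadicRadius k)) := by gcongr
      _ = _ := by ring
  have hlim := hdecay (V ∘ dyadicRadius) (fun k => hV0 _ (hmem k)) hrec
    (by rwa [Function.comp_apply, dyadicRadius_zero])
  refine le_antisymm (ge_of_tendsto' hlim fun k => ?_) (hV0 _ (by norm_num))
  exact hmono (by norm_num) (hmem k) (dyadicRadius_mem_Ioc k).1.le
end

section
/- Let 0 < η < 1 − s. Let a : [0,1] → [0,∞) be measurable and bounded, and suppose that for all sufficiently small ε > 0 one has ∫_0^ε a(r)(ε − r)^{-s} dr > ε^{η−1} ∫_0^ε a(r) dr. Suppose moreover there exists c > 0 with ∫_0^t a(r) dr ≥ c t^n for all small t > 0. Then we have a contradiction; that is, the two hypotheses are incompatible: there exists a sequence ε_j → 0 along which ε_j ∫_0^{ε_j} a(r)(ε_j − r)^{-s} dr ≤ ε_j^η ∫_0^{ε_j} a(r) dr. -/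
/-!
Write `F t = ∫_0^t a`. Integrating the reverse inequality over `ε ∈ (0, l)` and swapping the
order of integration, the right side becomes `∫_0^l a(r) ∫_r^l (ε - r)^{-s} dε dr
≤ l^{1-s}/(1-s) · F l`, while the left side is at least `(l/2) l^{η-1} F(l/2)` because `F` is
monotone. Hence `F(l/2) ≤ 2/(1-s) · l^{1-s-η} F l`, so along `l₁ 2^{-k}` the function `F` decays
geometrically with a ratio that is smaller than `2^{-n}` once `l₁` is small, which is
incompatible with `F t ≥ c tⁿ`.
-/

open MeasureTheory Set
open Filter Topology
open scoped ENNReal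

lemma false_of_geom_decay_of_geom_lower {u : ℕ → ℝ} {q ρ c : ℝ} (hq : 0 ≤ q) (hqρ : q < ρ)
    (hc : 0 < c) (hdecay : ∀ k, u (k + 1) ≤ q * u k) (hlower : ∀ k, c * ρ ^ k ≤ u k) : False := by
  have hρ : 0 < ρ := hq.trans_lt hqρ
  have hu₀ : 0 < u 0 := hc.trans_le (by simpa using hlower 0)
  obtain ⟨k, hk⟩ := exists_pow_lt_of_lt_one (div_pos hc hu₀) ((div_lt_one hρ).2 hqρ)
  have hle : c * ρ ^ k ≤ q ^ k * u 0 := (hlower k).trans (le_geom hq k fun j _ => hdecay j)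
  rw [div_pow, div_lt_div_iff₀ (pow_pos hρ k) hu₀] at hk
  linarith

lemma false_of_half_decay_of_pow_lower {F : ℝ → ℝ} {C c e l₀ : ℝ} (n : ℕ) (hC : 0 ≤ C)
    (hc : 0 < c) (he : 0 < e) (hl₀ : 0 < l₀)
    (hdecay : ∀ l ∈ Ioo 0 l₀, F (l / 2) ≤ C * l ^ e * F l)
    (hlower : ∀ l ∈ Ioo 0 l₀, c * l ^ n ≤ F l) : False := by
  have hsmall : Tendsto (fun l : ℝ => C * l ^ e) (𝓝[>] 0) (𝓝 0) := by
    have := ((Real.continuous_rpow_const he.le).tendsto 0).const_mul C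
    rw [Real.zero_rpow he.ne', mul_zero] at this
    exact tendsto_nhdsWithin_of_tendsto_nhds this
  obtain ⟨l₁, hCl₁, hl₁, hl₁l₀⟩ := ((hsmall.eventually (gt_mem_nhds (by positivity :
    (0 : ℝ) < (2 ^ n)⁻¹))).and (Ioo_mem_nhdsGT hl₀)).exists
  have hmem : ∀ k : ℕ, l₁ / 2 ^ k ∈ Ioo 0 l₀ := fun k =>
    ⟨by positivity, (div_le_self hl₁.le (one_le_pow₀ one_le_two)).trans_lt hl₁l₀⟩
  refine false_of_geom_decay_of_geom_lower (u := fun k => F (l₁ / 2 ^ k))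
    (by positivity) hCl₁ (by positivity : 0 < c * l₁ ^ n)
    (fun k => ?_) (fun k => ?_)
  · have hF : 0 ≤ F (l₁ / 2 ^ k) :=
      (mul_nonneg hc.le (pow_nonneg (hmem k).1.le n)).trans (hlower _ (hmem k))
    calc F (l₁ / 2 ^ (k + 1)) = F (l₁ / 2 ^ k / 2) := by rw [pow_succ, div_div]
      _ ≤ C * (l₁ / 2 ^ k) ^ e * F (l₁ / 2 ^ k) := hdecay _ (hmem k)
      _ ≤ C * l₁ ^ e * F (l₁ / 2 ^ k) := by
        gcongr
        exact div_le_self hl₁.le (one_le_pow₀ one_le_two)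
  · calc c * l₁ ^ n * ((2 ^ n)⁻¹) ^ k = c * (l₁ / 2 ^ k) ^ n := by
          rw [div_pow, ← pow_mul, mul_comm k n, pow_mul, inv_pow]; ring
      _ ≤ F (l₁ / 2 ^ k) := hlower _ (hmem k)

lemma setLIntegral_Ioo_volterra_le {g k : ℝ → ℝ≥0∞} (hg : Measurable g) (hk : Measurable k)
    (l : ℝ) :
    ∫⁻ ε in Ioo 0 l, ∫⁻ r in Ioo 0 ε, g r * k (ε - r) ≤
      (∫⁻ u in Ioo 0 l, k u) * ∫⁻ r in Ioo 0 l, g r := by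
  -- extending `k` by zero outside `(0, l)` turns the triangle `0 < r < ε < l` into a square
  set k' := (Ioo 0 l).indicator k
  have hk' : Measurable k' := hk.indicator measurableSet_Ioo
  calc ∫⁻ ε in Ioo 0 l, ∫⁻ r in Ioo 0 ε, g r * k (ε - r)
      ≤ ∫⁻ ε in Ioo 0 l, ∫⁻ r in Ioo 0 l, g r * k' (ε - r) := by
        refine setLIntegral_mono' measurableSet_Ioo fun ε hε => ?_
        calc ∫⁻ r in Ioo 0 ε, g r * k (ε - r) = ∫⁻ r in Ioo 0 ε, g r * k' (ε - r) :=
              setLIntegral_congr_fun measurableSet_Ioo fun r hr =>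
                congrArg (g r * ·) (indicator_of_mem (show ε - r ∈ Ioo 0 l from
                  ⟨sub_pos.2 hr.2, by linarith [hr.1, hε.2]⟩) k).symm
          _ ≤ _ := lintegral_mono_set (Ioo_subset_Ioo_right hε.2.le)
    _ = ∫⁻ r in Ioo 0 l, ∫⁻ ε in Ioo 0 l, g r * k' (ε - r) :=
        lintegral_lintegral_swap (by fun_prop)
    _ = ∫⁻ r in Ioo 0 l, g r * ∫⁻ ε in Ioo 0 l, k' (ε - r) := by
        refine setLIntegral_congr_fun measurableSet_Ioo fun r _ => ?_
        exact lintegral_const_mul _ (hk'.comp (measurable_id.sub_const _))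
    _ ≤ ∫⁻ r in Ioo 0 l, g r * ∫⁻ u in Ioo 0 l, k u := by
        refine setLIntegral_mono' measurableSet_Ioo fun r _ => ?_
        refine mul_le_mul_right ?_ _
        calc ∫⁻ ε in Ioo 0 l, k' (ε - r) ≤ ∫⁻ ε, k' (ε - r) := setLIntegral_le_lintegral _ _
          _ = ∫⁻ u, k' u := lintegral_sub_right_eq_self _ r
          _ = ∫⁻ u in Ioo 0 l, k u := lintegral_indicator measurableSet_Ioo _
    _ = (∫⁻ u in Ioo 0 l, k u) * ∫⁻ r in Ioo 0 l, g r := by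
        rw [lintegral_mul_const _ hg, mul_comm]

lemma setLIntegral_Ioo_rpow_neg {s l : ℝ} (hs : s < 1) (hl : 0 ≤ l) :
    ∫⁻ u in Ioo 0 l, ENNReal.ofReal (u ^ (-s)) = ENNReal.ofReal (l ^ (1 - s) / (1 - s)) := by
  have hint : IntegrableOn (fun u : ℝ => u ^ (-s)) (Ioc 0 l) :=
    (intervalIntegrable_iff_integrableOn_Ioc_of_le hl).1
      (intervalIntegral.intervalIntegrable_rpow' (by linarith))
  rw [← ofReal_integral_eq_lintegral_ofReal (hint.mono_set Ioo_subset_Ioc_self)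
      ((ae_restrict_iff' measurableSet_Ioo).2 (.of_forall fun u hu => Real.rpow_nonneg hu.1.le _)),
    ← integral_Ioc_eq_integral_Ioo, ← intervalIntegral.integral_of_le hl,
    integral_rpow (.inl (by linarith)), Real.zero_rpow (by linarith), neg_add_eq_sub, sub_zero]

lemma ofReal_mul_le_setLIntegral_Ioo_rpow_mul {Φ : ℝ → ℝ≥0∞} (hΦ : Monotone Φ) {η l : ℝ}
    (hη : η ≤ 1) (hl : 0 < l) :
    ENNReal.ofReal (l / 2 * l ^ (η - 1)) * Φ (l / 2) ≤
      ∫⁻ ε in Ioo 0 l, ENNReal.ofReal (ε ^ (η - 1)) * Φ ε :=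
  calc ENNReal.ofReal (l / 2 * l ^ (η - 1)) * Φ (l / 2)
      = ∫⁻ _ in Ioo (l / 2) l, ENNReal.ofReal (l ^ (η - 1)) * Φ (l / 2) := by
        rw [setLIntegral_const, Real.volume_Ioo, ENNReal.ofReal_mul (by linarith), sub_half]
        ring
    _ ≤ ∫⁻ ε in Ioo (l / 2) l, ENNReal.ofReal (ε ^ (η - 1)) * Φ ε := by
        refine setLIntegral_mono' measurableSet_Ioo fun ε hε => ?_
        gcongr ?_ * ?_
        · exact ENNReal.ofReal_le_ofReal
            (Real.rpow_le_rpow_of_nonpos (by linarith [hε.1]) hε.2.le (by linarith))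
        · exact hΦ hε.1.le
    _ ≤ ∫⁻ ε in Ioo 0 l, ENNReal.ofReal (ε ^ (η - 1)) * Φ ε :=
        lintegral_mono_set (Ioo_subset_Ioo_left (by linarith))

lemma setLIntegral_Ioo_half_le_of_rpow_mul_le {g : ℝ → ℝ≥0∞} (hg : Measurable g) {s η l : ℝ}
    (hs : s < 1) (hη : η ≤ 1) (hl : 0 < l)
    (hrev : ∀ ε ∈ Ioo 0 l, ENNReal.ofReal (ε ^ (η - 1)) * ∫⁻ r in Ioo 0 ε, g r ≤
      ∫⁻ r in Ioo 0 ε, g r * ENNReal.ofReal ((ε - r) ^ (-s))) :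
    ENNReal.ofReal (l / 2 * l ^ (η - 1)) * ∫⁻ r in Ioo 0 (l / 2), g r ≤
      ENNReal.ofReal (l ^ (1 - s) / (1 - s)) * ∫⁻ r in Ioo 0 l, g r :=
  calc ENNReal.ofReal (l / 2 * l ^ (η - 1)) * ∫⁻ r in Ioo 0 (l / 2), g r
      ≤ ∫⁻ ε in Ioo 0 l, ENNReal.ofReal (ε ^ (η - 1)) * ∫⁻ r in Ioo 0 ε, g r :=
        ofReal_mul_le_setLIntegral_Ioo_rpow_mul
          (fun _ _ h => lintegral_mono_set (Ioo_subset_Ioo_right h)) hη hl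
    _ ≤ ∫⁻ ε in Ioo 0 l, ∫⁻ r in Ioo 0 ε, g r * ENNReal.ofReal ((ε - r) ^ (-s)) :=
        setLIntegral_mono' measurableSet_Ioo hrev
    _ ≤ ENNReal.ofReal (l ^ (1 - s) / (1 - s)) * ∫⁻ r in Ioo 0 l, g r := by
        rw [← setLIntegral_Ioo_rpow_neg hs hl.le]
        exact setLIntegral_Ioo_volterra_le hg (by fun_prop) l

lemma integral_Ioo_half_le_of_rpow_mul_le {a : ℝ → ℝ} (ha : Measurable a) (ha₀ : ∀ r, 0 ≤ a r)
    {s η l : ℝ} (hs : s < 1) (hη : η ≤ 1) (hl : 0 < l) (hint : IntegrableOn a (Ioo 0 l))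
    (hrev : ∀ ε ∈ Ioo 0 l, ε ^ (η - 1) * ∫ r in Ioo 0 ε, a r ≤
      ∫ r in Ioo 0 ε, a r * (ε - r) ^ (-s)) :
    ∫ r in Ioo 0 (l / 2), a r ≤ 2 / (1 - s) * l ^ (1 - s - η) * ∫ r in Ioo 0 l, a r := by
  have hofReal : ∀ t ≤ l, ∫⁻ r in Ioo 0 t, ENNReal.ofReal (a r) =
      ENNReal.ofReal (∫ r in Ioo 0 t, a r) := fun t ht =>
    (ofReal_integral_eq_lintegral_ofReal (hint.mono_set (Ioo_subset_Ioo_right ht))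
      (.of_forall fun r => ha₀ r)).symm
  have key := setLIntegral_Ioo_half_le_of_rpow_mul_le ha.ennreal_ofReal hs hη hl fun ε hε => by
    have hpos : ∀ r ∈ Ioo 0 ε, 0 ≤ a r * (ε - r) ^ (-s) := fun r hr =>
      mul_nonneg (ha₀ r) (Real.rpow_nonneg (sub_pos.2 hr.2).le _)
    calc ENNReal.ofReal (ε ^ (η - 1)) * ∫⁻ r in Ioo 0 ε, ENNReal.ofReal (a r)
        = ENNReal.ofReal (ε ^ (η - 1) * ∫ r in Ioo 0 ε, a r) := by
          rw [hofReal ε hε.2.le, ENNReal.ofReal_mul (Real.rpow_nonneg hε.1.le _)]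
      _ ≤ ENNReal.ofReal (∫ r in Ioo 0 ε, a r * (ε - r) ^ (-s)) :=
          ENNReal.ofReal_le_ofReal (hrev ε hε)
      _ ≤ ∫⁻ r in Ioo 0 ε, ENNReal.ofReal (a r * (ε - r) ^ (-s)) := by
          rw [integral_eq_lintegral_of_nonneg_ae
            ((ae_restrict_iff' measurableSet_Ioo).2 (.of_forall hpos)) (by fun_prop)]
          exact ENNReal.ofReal_toReal_le
      _ = ∫⁻ r in Ioo 0 ε, ENNReal.ofReal (a r) * ENNReal.ofReal ((ε - r) ^ (-s)) :=
          lintegral_congr fun r => ENNReal.ofReal_mul (ha₀ r)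
  have hF : 0 ≤ ∫ r in Ioo 0 l, a r := setIntegral_nonneg measurableSet_Ioo fun r _ => ha₀ r
  rw [hofReal _ (half_le_self hl.le), hofReal _ le_rfl, ← ENNReal.ofReal_mul (by positivity),
    ← ENNReal.ofReal_mul (div_nonneg (by positivity) (by linarith)),
    ENNReal.ofReal_le_ofReal_iff (by bound)] at key
  have hcoef : 2 / (1 - s) * l ^ (1 - s - η) = l ^ (1 - s) / (1 - s) / (l / 2 * l ^ (η - 1)) := by
    rw [Real.rpow_sub hl, Real.rpow_sub_one hl.ne']
    field_simp
  rw [hcoef, div_mul_eq_mul_div, le_div_iff₀ (by positivity)]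
  linarith

theorem euler_lagrange_lemma_general (n : ℕ) (s η : ℝ)
    (hs : s ∈ Set.Ioo (0:ℝ) 1) (hη' : η < 1 - s)
    (a : ℝ → ℝ) (ham : Measurable a) (hanonneg : ∀ r, 0 ≤ a r)
    (hrev : ∃ ε₀ > (0:ℝ), ∀ ε ∈ Set.Ioo (0:ℝ) ε₀,
      (ε : ℝ) ^ (η - 1) * ∫ r in Set.Ioo (0:ℝ) ε, a r <
        ∫ r in Set.Ioo (0:ℝ) ε, a r * (ε - r) ^ (-s))
    (hdens : ∃ c > (0:ℝ), ∃ t₀ > (0:ℝ), ∀ t ∈ Set.Ioo (0:ℝ) t₀,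
      c * t ^ (n : ℕ) ≤ ∫ r in Set.Ioo (0:ℝ) t, a r) :
    False := by
  obtain ⟨ε₀, hε₀, hrev⟩ := hrev
  obtain ⟨c, hc, t₀, ht₀, hdens⟩ := hdens
  -- a Bochner integral that is positive cannot be the junk value of a non-integrable function
  have hint : ∀ t ∈ Ioo 0 t₀, IntegrableOn a (Ioo 0 t) := fun t ht =>
    Integrable.of_integral_ne_zero ((mul_pos hc (pow_pos ht.1 n)).trans_le (hdens t ht)).ne'
  refine false_of_half_decay_of_pow_lower n (C := 2 / (1 - s)) (e := 1 - s - η)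
    (div_nonneg zero_le_two (sub_nonneg.2 hs.2.le)) hc (sub_pos.2 (by linarith))
    (lt_min hε₀ ht₀) (fun l hl => ?_) (fun l hl => hdens l ⟨hl.1, hl.2.trans_le (min_le_right _ _)⟩)
  exact integral_Ioo_half_le_of_rpow_mul_le ham hanonneg hs.2 (by linarith [hs.1]) hl.1
    (hint l ⟨hl.1, hl.2.trans_le (min_le_right _ _)⟩)
    fun ε hε => (hrev ε ⟨hε.1, hε.2.trans (hl.2.trans_le (min_le_left _ _))⟩).le

/-- The measure-theoretic lemma behind the Euler–Lagrange equation in the viscosity sense: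
a nonnegative bounded density `a` cannot simultaneously satisfy the reverse weighted
inequality `∫_0^ε a(r)(ε−r)^{-s} dr > ε^{η−1} ∫_0^ε a(r) dr` for all small `ε` and the
lower density bound `∫_0^t a ≥ c tⁿ`; equivalently, there is a sequence `ε_j → 0` with
`ε_j ∫_0^{ε_j} a(r)(ε_j−r)^{-s} dr ≤ ε_j^η ∫_0^{ε_j} a(r) dr`. -/
theorem euler_lagrange_lemma (n : ℕ) (hn : 1 ≤ n) (s η : ℝ)
    (hs : s ∈ Set.Ioo (0:ℝ) 1) (hη : 0 < η) (hη' : η < 1 - s)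
    (a : ℝ → ℝ) (ham : Measurable a) (hanonneg : ∀ r, 0 ≤ a r)
    (habd : ∃ M : ℝ, ∀ r ∈ Set.Icc (0:ℝ) 1, a r ≤ M)
    (hrev : ∃ ε₀ > (0:ℝ), ∀ ε ∈ Set.Ioo (0:ℝ) ε₀,
      (ε : ℝ) ^ (η - 1) * ∫ r in Set.Ioo (0:ℝ) ε, a r <
        ∫ r in Set.Ioo (0:ℝ) ε, a r * (ε - r) ^ (-s))
    (hdens : ∃ c > (0:ℝ), ∃ t₀ > (0:ℝ), ∀ t ∈ Set.Ioo (0:ℝ) t₀,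
      c * t ^ (n : ℕ) ≤ ∫ r in Set.Ioo (0:ℝ) t, a r) :
    False :=
  euler_lagrange_lemma_general n s η hs hη' a ham hanonneg hrev hdens
end
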